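/- In a finite positive weighted arena G (all edge weights strictly positive) with maximal weight M and state set S, for every player i and every rank j ≥ 0, every j-winning strategy of Player i that minimizes the (j+1)-th regret is j-bounded by 6·M³·|S|: against every opposing strategy in P_{-i}^j, the outcome up to C_i has both players' accumulated weights at most 6·M³·|S|. -/

import Mathlib

open scoped ENat

/-- A strategy maps a finite play (history, current position last) to the chosen
next position. -/
abbrev Strat (S : Type) := List S → S

/-- A two-player turn-based game arena: an ownership function (`true` = Player 1,
`false` = Player 2), an initial position and a transition relation. -/
structure Arena (S : Type) where
  owner : S → Bool
  init : S
  edge : S → S → Prop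

namespace Arena

variable {S : Type}

/-- A strategy is valid if it always follows edges of the arena. -/
def Valid (A : Arena S) (σ : Strat S) : Prop :=
  ∀ l : List S, A.edge (l.getLastD A.init) (σ l)

/-- Combine the strategy `σi` of player `i` with the strategy `σo` of her
opponent into a strategy profile. -/
def pairFor (i : Bool) (σi σo : Strat S) : Bool → Strat S :=
  fun b => if b = i then σi else σo

/-- The prefix of length `n` of the outcome of a strategy profile. -/
def outList (A : Arena S) (σ : Bool → Strat S) : ℕ → List S
  | 0 => [A.init]
  | n + 1 =>
      let l := outList A σ n
      l ++ [σ (A.owner (l.getLastD A.init)) l]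

/-- The position reached after `n` rounds. -/
def cur (A : Arena S) (σ : Bool → Strat S) (n : ℕ) : S :=
  (A.outList σ n).getLastD A.init

/-- The total weight of a finite play. -/
def pathWeight (w : S → S → ℕ) (l : List S) : ℕ :=
  ((l.zip l.tail).map fun p => w p.1 p.2).sum

/-- `n` is the round of the first visit of the outcome to the target set `C`. -/
def firstVisit (A : Arena S) (C : Set S) (σ : Bool → Strat S) (n : ℕ) : Prop :=
  A.cur σ n ∈ C ∧ ∀ m < n, A.cur σ m ∉ C

/-- The utility of a strategy profile w.r.t. edge weights `w` and target set `C`: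
the sum of the weights up to the first visit to `C`, and `⊤` if `C` is never
visited. -/
noncomputable def util (A : Arena S) (w : S → S → ℕ) (C : Set S)
    (σ : Bool → Strat S) : ℕ∞ :=
  ⨅ (n : ℕ) (_ : A.firstVisit C σ n), (pathWeight w (A.outList σ n) : ℕ∞)

/-- A strategy of player `i` is winning if all its outcomes against valid
opposing strategies visit the target set `C`. -/
def Winning (A : Arena S) (C : Set S) (i : Bool) (σi : Strat S) : Prop :=
  ∀ σo : Strat S, A.Valid σo → ∃ n, A.cur (pairFor i σi σo) n ∈ C

/-- Best response value of player `i` against opposing strategy `σo`. -/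
noncomputable def br (A : Arena S) (w : S → S → ℕ) (C : Set S)
    (i : Bool) (σo : Strat S) : ℕ∞ :=
  ⨅ (σi : Strat S) (_ : A.Valid σi), A.util w C (pairFor i σi σo)

end Arena

/-- Regret of utility `u` w.r.t. best-response value `b`, with the convention
`⊤ - ⊤ = ⊤`. -/
noncomputable def regPairVal (u b : ℕ∞) : ℕ∞ := if u = ⊤ then ⊤ else u - b

namespace Arena

variable {S : Type}

/-- The regret of strategy `σi` of player `i`. -/
noncomputable def regOf (A : Arena S) (w : S → S → ℕ) (C : Set S)
    (i : Bool) (σi : Strat S) : ℕ∞ :=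
  ⨆ (σo : Strat S) (_ : A.Valid σo),
    regPairVal (A.util w C (pairFor i σi σo)) (A.br w C i σo)

/-- The minimal regret of player `i`. -/
noncomputable def regMin (A : Arena S) (w : S → S → ℕ) (C : Set S) (i : Bool) : ℕ∞ :=
  ⨅ (σi : Strat S) (_ : A.Valid σi), A.regOf w C i σi

end Arena

section Iterated

variable {Λ1 Λ2 : Type}

/-- Regret of `x` when the row player is restricted to `P1` and the column
player to `P2` (utilities `u`, penalties to be minimized). -/
noncomputable def regP (u : Λ1 → Λ2 → ℕ∞) (P1 : Set Λ1) (P2 : Set Λ2)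
    (x : Λ1) : ℕ∞ :=
  ⨆ y ∈ P2, regPairVal (u x y) (⨅ x' ∈ P1, u x' y)

/-- Minimal regret of the row player over `P1` against `P2`. -/
noncomputable def regPmin (u : Λ1 → Λ2 → ℕ∞) (P1 : Set Λ1) (P2 : Set Λ2) : ℕ∞ :=
  ⨅ x ∈ P1, regP u P1 P2 x

/-- The delete operator: keep exactly the strategies of each player minimizing
her regret against the current strategy sets. -/
noncomputable def Dop (u1 u2 : Λ1 → Λ2 → ℕ∞) (P : Set Λ1 × Set Λ2) :
    Set Λ1 × Set Λ2 :=
  ({x ∈ P.1 | regP u1 P.1 P.2 x = regPmin u1 P.1 P.2},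
   {y ∈ P.2 | regP (fun y' x' => u2 x' y') P.2 P.1 y
      = regPmin (fun y' x' => u2 x' y') P.2 P.1})

/-- The strategies surviving `j` rounds of deletion. -/
noncomputable def Pset (u1 u2 : Λ1 → Λ2 → ℕ∞) (j : ℕ) : Set Λ1 × Set Λ2 :=
  (Dop u1 u2)^[j] (Set.univ, Set.univ)

end Iterated

namespace Arena

variable {S : Type}

/-- The type of valid strategies of an arena. -/
def VStrat (A : Arena S) := {σ : Strat S // A.Valid σ}

/-- Utility of player `i` as a function of her strategy and her opponent's
strategy (edge weights `w`, target sets `C`). -/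
noncomputable def uFor (A : Arena S) (w : Bool → S → S → ℕ) (C : Bool → Set S)
    (i : Bool) : A.VStrat → A.VStrat → ℕ∞ :=
  fun x y => A.util (w i) (C i) (pairFor i x.1 y.1)

/-- The pair of sets of strategies surviving `j` rounds of deletion of
non-regret-minimizing strategies (Player 1 component first). -/
noncomputable def PIter (A : Arena S) (w : Bool → S → S → ℕ) (C : Bool → Set S)
    (j : ℕ) : Set A.VStrat × Set A.VStrat :=
  Pset (A.uFor w C true) (fun x y => A.uFor w C false y x) j

/-- The set of player-`i` strategies surviving `j` rounds of deletion. -/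
noncomputable def Pside (A : Arena S) (w : Bool → S → S → ℕ) (C : Bool → Set S)
    (i : Bool) (j : ℕ) : Set A.VStrat :=
  if i = true then (A.PIter w C j).1 else (A.PIter w C j).2

/-- The iterated regret of player `i` (the stable value of the nonincreasing
sequence of `j`-th regrets). -/
noncomputable def regStar (A : Arena S) (w : Bool → S → S → ℕ)
    (C : Bool → Set S) (i : Bool) : ℕ∞ :=
  ⨅ j : ℕ, regPmin (A.uFor w C i) (A.Pside w C i j) (A.Pside w C (!i) j)

end Arena

/-!
A regret-minimizing strategy is at most twice as bad as any strategy available at the same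
level: its regret is bounded by that strategy's, and the best response is bounded by that
strategy's utility. So it suffices to exhibit, at a suitable level, a strategy of player `i`
reaching `Cᵢ` fast against every surviving opponent.

If player `i` can force `Cᵢ` from the start, her attractor strategy does so within `|S|` moves,
and `λᵢ`, which minimizes regret among all strategies, has utility `≤ 2M|S|`. Otherwise the
opponent can trap her, so all her regrets are infinite and nothing of hers is deleted in the
first round; since `λᵢ` is `j`-winning, the opponent must in turn be able to force `C₋ᵢ`, so
every opponent strategy surviving one round reaches `C₋ᵢ` within `2M|S|` moves. At the last
level `t ≤ j` where all strategies of player `i` survive, compare `λᵢ` with the strategy that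
plays `λᵢ` until `C₋ᵢ` is visited and then the attractor strategy: it reaches `Cᵢ` within
`2M|S| + |S|` moves, because if at that visit the play were outside the attractor, the
opponent could start trapping there without changing her own utility, and `λᵢ` would lose
against a surviving strategy.
Positive weights bound the length of the play by `2M(2M|S| + |S|)`, whence each player's
weight is at most `M` times that, `≤ 6M³|S|`.
-/

section Regret

variable {Λ1 Λ2 : Type} {u : Λ1 → Λ2 → ℕ∞} {P1 : Set Λ1} {P2 : Set Λ2} {x x' : Λ1}
  {y : Λ2}

lemma regP_le_of_forall_le {B : ℕ∞} (h : ∀ y ∈ P2, u x y ≤ B) : regP u P1 P2 x ≤ B := by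
  refine iSup₂_le fun y hy => ?_
  unfold regPairVal
  split_ifs with htop
  · exact htop ▸ h y hy
  · exact tsub_le_self.trans (h y hy)

lemma regP_eq_top (hy : y ∈ P2) (h : u x y = ⊤) : regP u P1 P2 x = ⊤ :=
  top_le_iff.1 <| le_iSup₂_of_le (f := fun y _ => regPairVal (u x y) (⨅ x' ∈ P1, u x' y)) y hy
    (by simp [regPairVal, h])

lemma le_add_of_regP_le {B : ℕ∞} (hB : B ≠ ⊤) (h : regP u P1 P2 x ≤ B) (hy : y ∈ P2)
    (hx' : x' ∈ P1) : u x y ≤ B + u x' y := by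
  have hne : u x y ≠ ⊤ := fun htop => hB (top_le_iff.1 (regP_eq_top hy htop ▸ h))
  have hreg : u x y - ⨅ x'' ∈ P1, u x'' y ≤ B := by
    have := (le_iSup₂ (f := fun y _ => regPairVal (u x y) (⨅ x' ∈ P1, u x' y)) y hy).trans h
    rwa [regPairVal, if_neg hne] at this
  exact (tsub_le_iff_right.1 hreg).trans (add_le_add le_rfl (iInf₂_le x' hx'))

lemma le_two_mul_of_regP_eq_regPmin (hx : regP u P1 P2 x = regPmin u P1 P2) (hx' : x' ∈ P1)
    {B : ℕ∞} (hB : B ≠ ⊤) (hx'B : ∀ y ∈ P2, u x' y ≤ B) (hy : y ∈ P2) :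
    u x y ≤ 2 * B := by
  have hreg : regP u P1 P2 x ≤ B :=
    hx ▸ (iInf₂_le x' hx').trans (regP_le_of_forall_le hx'B)
  rw [two_mul]
  exact (le_add_of_regP_le hB hreg hy hx').trans (add_le_add le_rfl (hx'B y hy))

lemma setOf_regP_eq_regPmin_of_regPmin_eq_top (h : regPmin u P1 P2 = ⊤) :
    {x ∈ P1 | regP u P1 P2 x = regPmin u P1 P2} = P1 :=
  Set.sep_eq_self_iff_mem_true.2 fun x hx =>
    h ▸ top_le_iff.1 (h ▸ iInf₂_le (f := fun x _ => regP u P1 P2 x) x hx)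

end Regret

namespace Arena

variable {S : Type}

section Plays

variable (A : Arena S)

lemma exists_edge_of_valid {σ : Strat S} (hσ : A.Valid σ) (s : S) : ∃ t, A.edge s t :=
  ⟨σ [s], by simpa using hσ [s]⟩

lemma outList_succ (σ : Bool → Strat S) (n : ℕ) :
    A.outList σ (n + 1) =
      A.outList σ n ++ [σ (A.owner (A.cur σ n)) (A.outList σ n)] := rfl

lemma cur_succ (σ : Bool → Strat S) (n : ℕ) :
    A.cur σ (n + 1) = σ (A.owner (A.cur σ n)) (A.outList σ n) :=
  List.getLastD_concat

lemma mem_outList {σ : Bool → Strat S} {n : ℕ} {a : S} :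
    a ∈ A.outList σ n ↔ ∃ k ≤ n, A.cur σ k = a := by
  induction n with
  | zero => simp [outList, cur, eq_comm]
  | succ n ih =>
    simp only [outList_succ, ← cur_succ, List.mem_append, List.mem_singleton, ih,
      Nat.le_succ_iff, or_and_right, exists_or, exists_eq_left, eq_comm]

lemma outList_ne_nil (σ : Bool → Strat S) (n : ℕ) : A.outList σ n ≠ [] := by
  cases n <;> simp [outList]

lemma edge_cur {σ : Bool → Strat S} (hv : ∀ b, A.Valid (σ b)) (n : ℕ) :
    A.edge (A.cur σ n) (A.cur σ (n + 1)) := by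
  rw [cur_succ]
  exact hv _ _

lemma pathWeight_cons_cons (w : S → S → ℕ) (x y : S) (l : List S) :
    pathWeight w (x :: y :: l) = w x y + pathWeight w (y :: l) := by
  simp [pathWeight]

lemma pathWeight_cons_append_singleton (w : S → S → ℕ) (x a : S) (l : List S) :
    pathWeight w (x :: l ++ [a]) = pathWeight w (x :: l) + w (l.getLastD x) a := by
  induction l generalizing x with
  | nil => simp [pathWeight]
  | cons y l ih =>
    rw [List.cons_append, List.cons_append, pathWeight_cons_cons, ← List.cons_append, ih,
      pathWeight_cons_cons, List.getLastD_cons, add_assoc]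

lemma pathWeight_outList_succ (w : S → S → ℕ) (σ : Bool → Strat S) (n : ℕ) :
    pathWeight w (A.outList σ (n + 1)) =
      pathWeight w (A.outList σ n) + w (A.cur σ n) (A.cur σ (n + 1)) := by
  obtain ⟨x, l, hxl⟩ := List.exists_cons_of_ne_nil (A.outList_ne_nil σ n)
  have hcur : A.cur σ n = l.getLastD x := by rw [cur, hxl, List.getLastD_cons]
  rw [outList_succ, ← cur_succ A σ n, hxl, pathWeight_cons_append_singleton, hcur]

lemma pathWeight_outList_le {w : S → S → ℕ} {M : ℕ} (hM : ∀ s t, w s t ≤ M)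
    (σ : Bool → Strat S) (n : ℕ) : pathWeight w (A.outList σ n) ≤ M * n := by
  induction n with
  | zero => simp [outList, pathWeight]
  | succ n ih =>
    rw [pathWeight_outList_succ, Nat.mul_succ]
    exact Nat.add_le_add ih (hM _ _)

lemma le_pathWeight_outList {w : S → S → ℕ} (hpos : ∀ s t, A.edge s t → 1 ≤ w s t)
    {σ : Bool → Strat S} (hv : ∀ b, A.Valid (σ b)) (n : ℕ) :
    n ≤ pathWeight w (A.outList σ n) := by
  induction n with
  | zero => exact Nat.zero_le _
  | succ n ih =>
    rw [pathWeight_outList_succ]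
    exact Nat.add_le_add ih (hpos _ _ (A.edge_cur hv n))

end Plays

section Profiles

lemma pairFor_self (i : Bool) (x y : Strat S) : pairFor i x y i = x := if_pos rfl

lemma pairFor_not_self (i : Bool) (x y : Strat S) : pairFor i x y (!i) = y := by
  cases i <;> rfl

lemma pairFor_not (i : Bool) (x y : Strat S) : pairFor (!i) y x = pairFor i x y := by
  funext b
  cases b <;> cases i <;> rfl

lemma pairFor_valid (A : Arena S) {i : Bool} {x y : Strat S} (hx : A.Valid x)
    (hy : A.Valid y) (b : Bool) : A.Valid (pairFor i x y b) := by
  unfold pairFor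
  split_ifs
  exacts [hx, hy]

end Profiles

section FirstVisit

variable (A : Arena S) {w : S → S → ℕ} {C : Set S} {σ σ' : Bool → Strat S}

lemma firstVisit_unique {n n' : ℕ} (h : A.firstVisit C σ n) (h' : A.firstVisit C σ n') :
    n = n' := by
  by_contra hne
  rcases Nat.lt_or_gt_of_ne hne with hlt | hlt
  exacts [h'.2 n hlt h.1, h.2 n' hlt h'.1]

lemma util_eq_of_firstVisit {n : ℕ} (h : A.firstVisit C σ n) :
    A.util w C σ = pathWeight w (A.outList σ n) :=
  le_antisymm (iInf₂_le n h) <| le_iInf₂ fun n' h' => by rw [A.firstVisit_unique h h']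

lemma exists_firstVisit {k : ℕ} (h : A.cur σ k ∈ C) : ∃ n ≤ k, A.firstVisit C σ n := by
  classical
  have hex : ∃ n, A.cur σ n ∈ C := ⟨k, h⟩
  exact ⟨Nat.find hex, Nat.find_min' hex h, Nat.find_spec hex, fun _ => Nat.find_min hex⟩

lemma util_eq_top (h : ∀ n, A.cur σ n ∉ C) : A.util w C σ = ⊤ :=
  iInf₂_eq_top.2 fun n hn => absurd hn.1 (h n)

lemma exists_cur_mem_of_util_ne_top (h : A.util w C σ ≠ ⊤) : ∃ n, A.cur σ n ∈ C := by
  by_contra! hC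
  exact h (A.util_eq_top hC)

lemma util_le_of_cur_mem {M : ℕ} (hM : ∀ s t, w s t ≤ M) {k : ℕ} (h : A.cur σ k ∈ C) :
    A.util w C σ ≤ ↑(M * k) := by
  obtain ⟨n, hnk, hfv⟩ := A.exists_firstVisit h
  rw [A.util_eq_of_firstVisit hfv, Nat.cast_le]
  exact (A.pathWeight_outList_le hM σ n).trans (Nat.mul_le_mul_left M hnk)

lemma exists_firstVisit_le_of_util_le (hpos : ∀ s t, A.edge s t → 1 ≤ w s t)
    (hv : ∀ b, A.Valid (σ b)) {R : ℕ} (h : A.util w C σ ≤ R) :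
    ∃ m ≤ R, A.firstVisit C σ m := by
  obtain ⟨k, hk⟩ := A.exists_cur_mem_of_util_ne_top (ne_top_of_le_ne_top (by simp) h)
  obtain ⟨m, -, hfv⟩ := A.exists_firstVisit hk
  rw [A.util_eq_of_firstVisit hfv, Nat.cast_le] at h
  exact ⟨m, (A.le_pathWeight_outList hpos hv m).trans h, hfv⟩

lemma pathWeight_le_of_util_le (hpos : ∀ s t, A.edge s t → 1 ≤ w s t) {w' : S → S → ℕ}
    {M : ℕ} (hM : ∀ s t, w' s t ≤ M) (hv : ∀ b, A.Valid (σ b)) {n B : ℕ}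
    (hfv : A.firstVisit C σ n) (hB : A.util w C σ ≤ B) :
    pathWeight w' (A.outList σ n) ≤ M * B := by
  rw [A.util_eq_of_firstVisit hfv, Nat.cast_le] at hB
  exact (A.pathWeight_outList_le hM σ n).trans
    (Nat.mul_le_mul_left M ((A.le_pathWeight_outList hpos hv n).trans hB))

def AgreeOutside (C : Set S) (σ σ' : Bool → Strat S) : Prop :=
  ∀ l : List S, (∀ s ∈ l, s ∉ C) → ∀ b, σ b l = σ' b l

lemma AgreeOutside.symm (H : AgreeOutside C σ σ') : AgreeOutside C σ' σ :=
  fun l hl b => (H l hl b).symm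

lemma outList_eq_of_agreeOutside (H : AgreeOutside C σ σ') {n : ℕ}
    (hn : ∀ k < n, A.cur σ k ∉ C) : A.outList σ' n = A.outList σ n := by
  induction n with
  | zero => rfl
  | succ n ih =>
    have hl : A.outList σ' n = A.outList σ n := ih fun k hk => hn k (by omega)
    have hcur : A.cur σ' n = A.cur σ n := congrArg (List.getLastD · A.init) hl
    have hagree := H (A.outList σ n) fun s hs => by
      obtain ⟨k, hk, rfl⟩ := A.mem_outList.1 hs
      exact hn k (by omega)
    rw [outList_succ, outList_succ, hl, hcur, hagree]

lemma cur_eq_of_agreeOutside (H : AgreeOutside C σ σ') {n : ℕ}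
    (hn : ∀ k < n, A.cur σ k ∉ C) : A.cur σ' n = A.cur σ n :=
  congrArg (List.getLastD · A.init) (A.outList_eq_of_agreeOutside H hn)

lemma cur_eq_of_agreeOutside_of_firstVisit (H : AgreeOutside C σ σ') {n : ℕ}
    (hfv : A.firstVisit C σ n) {k : ℕ} (hk : k ≤ n) : A.cur σ' k = A.cur σ k :=
  A.cur_eq_of_agreeOutside H fun k' hk' => hfv.2 k' (by omega)

lemma firstVisit_of_agreeOutside (H : AgreeOutside C σ σ') {n : ℕ} (hfv : A.firstVisit C σ n) :
    A.firstVisit C σ' n :=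
  ⟨A.cur_eq_of_agreeOutside_of_firstVisit H hfv le_rfl ▸ hfv.1, fun k hk =>
    A.cur_eq_of_agreeOutside_of_firstVisit H hfv hk.le ▸ hfv.2 k hk⟩

lemma util_eq_of_agreeOutside (H : AgreeOutside C σ σ') : A.util w C σ' = A.util w C σ := by
  by_cases hvis : ∃ k, A.cur σ k ∈ C
  · obtain ⟨k, hk⟩ := hvis
    obtain ⟨n, -, hfv⟩ := A.exists_firstVisit hk
    rw [A.util_eq_of_firstVisit hfv,
      A.util_eq_of_firstVisit (A.firstVisit_of_agreeOutside H hfv),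
      A.outList_eq_of_agreeOutside H hfv.2]
  · push Not at hvis
    refine (A.util_eq_top fun n => ?_).trans (A.util_eq_top hvis).symm
    rw [A.cur_eq_of_agreeOutside H fun k _ => hvis k]
    exact hvis n

end FirstVisit

section Switch

variable (A : Arena S)

open Classical in
noncomputable def switch (C : Set S) (σ τ : A.VStrat) : A.VStrat :=
  ⟨fun l => if ∃ s ∈ l, s ∈ C then τ.1 l else σ.1 l, fun l => by
    dsimp only
    split_ifs
    exacts [τ.2 l, σ.2 l]⟩

variable {C : Set S}

lemma switch_of_forall_not_mem {σ τ : A.VStrat} {l : List S} (hl : ∀ s ∈ l, s ∉ C) :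
    (A.switch C σ τ).1 l = σ.1 l := by
  simp only [switch]
  rw [if_neg (by simpa using hl)]

lemma switch_of_mem {σ τ : A.VStrat} {l : List S} {s : S} (hs : s ∈ l) (hC : s ∈ C) :
    (A.switch C σ τ).1 l = τ.1 l := by
  simp only [switch]
  rw [if_pos ⟨s, hs, hC⟩]

lemma agreeOutside_switch_left (i : Bool) (σ τ : A.VStrat) (y : Strat S) :
    AgreeOutside C (pairFor i (A.switch C σ τ).1 y) (pairFor i σ.1 y) := by
  intro l hl b
  unfold pairFor
  split_ifs
  exacts [A.switch_of_forall_not_mem hl, rfl]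

lemma agreeOutside_switch_right (i : Bool) (x : Strat S) (σ τ : A.VStrat) :
    AgreeOutside C (pairFor i x (A.switch C σ τ).1) (pairFor i x σ.1) := by
  intro l hl b
  unfold pairFor
  split_ifs
  exacts [rfl, A.switch_of_forall_not_mem hl]

end Switch

section Attractor

variable (A : Arena S) (p : Bool) (T : Set S)

def cpre (X : Set S) : Set S :=
  {s | A.owner s = p ∧ (∃ t, A.edge s t ∧ t ∈ X) ∨
    A.owner s ≠ p ∧ ∀ t, A.edge s t → t ∈ X}

/-- The states from which player `p` can force a visit to `T` within `k` moves. -/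
def attr : ℕ → Set S
  | 0 => T
  | k + 1 => attr k ∪ A.cpre p (attr k)

def attrU : Set S := ⋃ k, A.attr p T k

noncomputable def attrRank (s : S) : ℕ := sInf {k | s ∈ A.attr p T k}

lemma attr_mono : Monotone (A.attr p T) :=
  monotone_nat_of_le_succ fun _ => Set.subset_union_left

lemma attr_subset_attrU (k : ℕ) : A.attr p T k ⊆ A.attrU p T :=
  Set.subset_iUnion (A.attr p T) k

lemma attr_add_eq_of_succ_eq {k : ℕ} (h : A.attr p T (k + 1) = A.attr p T k) (d : ℕ) :
    A.attr p T (k + d) = A.attr p T k := by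
  induction d with
  | zero => rfl
  | succ d ih => rw [← add_assoc, attr, ih, ← attr, h]

lemma mem_attr_attrRank {s : S} (h : s ∈ A.attrU p T) : s ∈ A.attr p T (A.attrRank p T s) :=
  Nat.sInf_mem (Set.mem_iUnion.1 h)

lemma attrRank_le {s : S} {k : ℕ} (h : s ∈ A.attr p T k) : A.attrRank p T s ≤ k :=
  Nat.sInf_le h

lemma exists_attrRank_eq_succ {s : S} (h : s ∈ A.attrU p T) (hT : s ∉ T) :
    ∃ r, A.attrRank p T s = r + 1 ∧ s ∈ A.cpre p (A.attr p T r) := by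
  have hrank := A.mem_attr_attrRank p T h
  obtain ⟨r, hr⟩ : ∃ r, A.attrRank p T s = r + 1 :=
    Nat.exists_eq_succ_of_ne_zero fun h0 => hT (by rwa [h0] at hrank)
  rw [hr] at hrank
  refine ⟨r, hr, hrank.resolve_left fun hs => ?_⟩
  have := A.attrRank_le p T hs
  omega

variable [Fintype S]

lemma exists_attr_succ_eq :
    ∃ k ≤ Fintype.card S, A.attr p T (k + 1) = A.attr p T k := by
  -- otherwise `k ↦ A.attr p T k` is strictly increasing up to `|S| + 1`
  by_contra! hne
  have hcard : ∀ k ≤ Fintype.card S + 1, k ≤ (A.attr p T k).ncard := by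
    intro k
    induction k with
    | zero => exact fun _ => Nat.zero_le _
    | succ k ih =>
      intro hk
      have hlt : A.attr p T k ⊂ A.attr p T (k + 1) :=
        (A.attr_mono p T k.le_succ).ssubset_of_ne (hne k (by omega)).symm
      exact (ih (by omega)).trans_lt (Set.ncard_lt_ncard hlt)
  have := (hcard _ le_rfl).trans (Set.ncard_le_card (A.attr p T (Fintype.card S + 1)))
  simp at this

lemma attrU_eq_attr_card : A.attrU p T = A.attr p T (Fintype.card S) := by
  refine (Set.iUnion_subset fun k => ?_).antisymm (A.attr_subset_attrU p T _)
  obtain ⟨k₀, hk₀, hst⟩ := A.exists_attr_succ_eq p T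
  rcases le_total k (Fintype.card S) with hk | hk
  · exact A.attr_mono p T hk
  · rw [← Nat.add_sub_cancel' (hk₀.trans hk), A.attr_add_eq_of_succ_eq p T hst]
    exact A.attr_mono p T hk₀

lemma cpre_attrU_subset : A.cpre p (A.attrU p T) ⊆ A.attrU p T := by
  intro s hs
  rw [attrU_eq_attr_card] at hs
  exact A.attr_subset_attrU p T (Fintype.card S + 1) (Or.inr hs)

lemma attrRank_le_card {s : S} (h : s ∈ A.attrU p T) : A.attrRank p T s ≤ Fintype.card S :=
  A.attrRank_le p T (A.attrU_eq_attr_card p T ▸ h)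

end Attractor

section Strategies

variable (A : Arena S) (hsucc : ∀ s, ∃ t, A.edge s t)

open Classical in
noncomputable def greedy (P : S → S → Prop) : A.VStrat :=
  ⟨fun l => if h : ∃ t, A.edge (l.getLastD A.init) t ∧ P (l.getLastD A.init) t then h.choose
    else (hsucc (l.getLastD A.init)).choose, fun l => by
    dsimp only
    split_ifs with h
    exacts [h.choose_spec.1, (hsucc _).choose_spec]⟩

lemma greedy_spec {P : S → S → Prop} {l : List S}
    (h : ∃ t, A.edge (l.getLastD A.init) t ∧ P (l.getLastD A.init) t) :
    P (l.getLastD A.init) ((A.greedy hsucc P).1 l) := by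
  simp only [greedy, dif_pos h]
  exact h.choose_spec.2

variable (p : Bool) (T : Set S)

noncomputable def attStrat : A.VStrat :=
  A.greedy hsucc fun s t => t ∈ A.attrU p T ∧ A.attrRank p T t < A.attrRank p T s

noncomputable def trapStrat : A.VStrat :=
  A.greedy hsucc fun _ t => t ∉ A.attrU p T

variable {σ : Bool → Strat S}

lemma attrRank_cur_succ_lt (hv : ∀ b, A.Valid (σ b)) {k : ℕ} (hk : A.cur σ k ∈ A.attrU p T)
    (hT : A.cur σ k ∉ T)
    (hplay : σ p (A.outList σ k) = (A.attStrat hsucc p T).1 (A.outList σ k)) :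
    A.cur σ (k + 1) ∈ A.attrU p T ∧
      A.attrRank p T (A.cur σ (k + 1)) < A.attrRank p T (A.cur σ k) := by
  obtain ⟨r, hr, hc⟩ := A.exists_attrRank_eq_succ p T hk hT
  have hlow : ∀ t ∈ A.attr p T r,
      t ∈ A.attrU p T ∧ A.attrRank p T t < A.attrRank p T (A.cur σ k) := fun t ht =>
    ⟨A.attr_subset_attrU p T r ht, hr ▸ Nat.lt_succ_of_le (A.attrRank_le p T ht)⟩
  rcases hc with ⟨hown, t, het, ht⟩ | ⟨-, hall⟩
  · rw [cur_succ, hown, hplay]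
    exact A.greedy_spec hsucc
      (P := fun s t => t ∈ A.attrU p T ∧ A.attrRank p T t < A.attrRank p T s)
      ⟨t, het, hlow t ht⟩
  · exact hlow _ (hall _ (A.edge_cur hv k))

variable [Fintype S]

lemma exists_cur_mem_of_attStrat (hv : ∀ b, A.Valid (σ b)) {m : ℕ}
    (hm : A.cur σ m ∈ A.attrU p T)
    (hplay : ∀ k ≥ m, σ p (A.outList σ k) = (A.attStrat hsucc p T).1 (A.outList σ k)) :
    ∃ n, m ≤ n ∧ n ≤ m + Fintype.card S ∧ A.cur σ n ∈ T := by
  suffices h : ∀ r, ∀ k ≥ m, A.attrRank p T (A.cur σ k) ≤ r →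
      A.cur σ k ∈ A.attrU p T → ∃ n, k ≤ n ∧ n ≤ k + r ∧ A.cur σ n ∈ T by
    obtain ⟨n, h1, h2, h3⟩ := h _ m le_rfl le_rfl hm
    exact ⟨n, h1, h2.trans (by have := A.attrRank_le_card p T hm; omega), h3⟩
  intro r
  induction r with
  | zero =>
    intro k _ hr hk
    refine ⟨k, le_rfl, le_rfl, ?_⟩
    have hk0 := A.mem_attr_attrRank p T hk
    rw [Nat.le_zero.1 hr] at hk0
    exact hk0
  | succ r ih =>
    intro k hmk hr hk
    by_cases hT : A.cur σ k ∈ T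
    · exact ⟨k, le_rfl, by omega, hT⟩
    obtain ⟨hk', hlt⟩ := A.attrRank_cur_succ_lt hsucc p T hv hk hT (hplay k hmk)
    obtain ⟨n, h1, h2, h3⟩ := ih (k + 1) (by omega) (by omega) hk'
    exact ⟨n, by omega, by omega, h3⟩

lemma cur_not_mem_attrU_of_trapStrat (hv : ∀ b, A.Valid (σ b)) {m : ℕ}
    (hm : A.cur σ m ∉ A.attrU p T)
    (hplay : ∀ k ≥ m, σ (!p) (A.outList σ k) = (A.trapStrat hsucc p T).1 (A.outList σ k)) :
    ∀ n ≥ m, A.cur σ n ∉ A.attrU p T := by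
  intro n hn
  induction n, hn using Nat.le_induction with
  | base => exact hm
  | succ k hk ih =>
    have hnc : A.cur σ k ∉ A.cpre p (A.attrU p T) := fun h => ih (A.cpre_attrU_subset p T h)
    simp only [cpre, Set.mem_ofPred_eq, not_or, not_and, not_exists, not_forall] at hnc
    by_cases hown : A.owner (A.cur σ k) = p
    · exact fun h => hnc.1 hown _ (A.edge_cur hv k) h
    · obtain ⟨t, het, ht⟩ := hnc.2 hown
      rw [cur_succ, Bool.eq_not_iff.2 hown, hplay k hk]
      exact A.greedy_spec hsucc (P := fun _ t => t ∉ A.attrU p T) ⟨t, het, ht⟩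

variable {w : S → S → ℕ} {M : ℕ}

lemma util_attStrat_le (hM : ∀ s t, w s t ≤ M) (hinit : A.init ∈ A.attrU p T)
    (y : A.VStrat) :
    A.util w T (pairFor p (A.attStrat hsucc p T).1 y.1) ≤ ↑(M * Fintype.card S) := by
  obtain ⟨n, -, hn, hT⟩ := A.exists_cur_mem_of_attStrat hsucc p T
    (A.pairFor_valid (A.attStrat hsucc p T).2 y.2) (m := 0) hinit
    fun k _ => by rw [pairFor_self]
  exact (A.util_le_of_cur_mem hM hT).trans
    (by exact_mod_cast Nat.mul_le_mul_left M (by omega))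

lemma cur_trapStrat_not_mem (hinit : A.init ∉ A.attrU p T) (x : A.VStrat) (n : ℕ) :
    A.cur (pairFor p x.1 (A.trapStrat hsucc p T).1) n ∉ T := fun h =>
  A.cur_not_mem_attrU_of_trapStrat hsucc p T (A.pairFor_valid x.2 (A.trapStrat hsucc p T).2)
    (m := 0) hinit (fun k _ => by rw [pairFor_not_self]) n (Nat.zero_le n)
    (A.attr_subset_attrU p T 0 h)

end Strategies

section Deletion

variable (A : Arena S) (w : Bool → S → S → ℕ) (C : Bool → Set S)

lemma Pside_zero (i : Bool) : A.Pside w C i 0 = Set.univ := by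
  cases i <;> rfl

lemma Pside_succ (i : Bool) (j : ℕ) :
    A.Pside w C i (j + 1) = {x ∈ A.Pside w C i j |
      regP (A.uFor w C i) (A.Pside w C i j) (A.Pside w C (!i) j) x =
        regPmin (A.uFor w C i) (A.Pside w C i j) (A.Pside w C (!i) j)} := by
  cases i <;> simp [Pside, PIter, Pset, Function.iterate_succ_apply', Dop]

lemma Pside_antitone (i : Bool) : Antitone (A.Pside w C i) :=
  antitone_nat_of_succ_le fun j => by
    rw [Pside_succ]
    exact Set.sep_subset _ _

lemma Pside_succ_eq_of_regPmin_eq_top {i : Bool} {j : ℕ}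
    (h : regPmin (A.uFor w C i) (A.Pside w C i j) (A.Pside w C (!i) j) = ⊤) :
    A.Pside w C i (j + 1) = A.Pside w C i j := by
  rw [Pside_succ, setOf_regP_eq_regPmin_of_regPmin_eq_top h]

lemma Pside_succ_eq_of_uFor_eq_top {i : Bool} {j : ℕ} {y : A.VStrat}
    (hy : y ∈ A.Pside w C (!i) j) (h : ∀ x, A.uFor w C i x y = ⊤) :
    A.Pside w C i (j + 1) = A.Pside w C i j :=
  A.Pside_succ_eq_of_regPmin_eq_top w C <| iInf₂_eq_top.2 fun x _ => regP_eq_top hy (h x)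

lemma mem_Pside_of_uFor_eq {b : Bool} {y y' : A.VStrat}
    (h : ∀ x, A.uFor w C b y' x = A.uFor w C b y x) {t : ℕ} (hy : y ∈ A.Pside w C b t) :
    y' ∈ A.Pside w C b t := by
  induction t with
  | zero => simp [Pside_zero]
  | succ t ih =>
    rw [Pside_succ] at hy ⊢
    have hreg : regP (A.uFor w C b) (A.Pside w C b t) (A.Pside w C (!b) t) y' =
        regP (A.uFor w C b) (A.Pside w C b t) (A.Pside w C (!b) t) y := by
      simp only [regP, h]
    exact ⟨ih hy.1, hreg.trans hy.2⟩

lemma exists_level_Pside_eq_univ {i : Bool} {j : ℕ} {li : A.VStrat}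
    (hli : li ∈ A.Pside w C i (j + 1))
    (hwin : ∀ lo ∈ A.Pside w C (!i) j, ∃ n, A.cur (pairFor i li.1 lo.1) n ∈ C i) :
    ∃ t ≤ j, A.Pside w C i t = Set.univ ∧ li ∈ A.Pside w C i (t + 1) ∧
      ∀ y ∈ A.Pside w C (!i) t, ∃ n, A.cur (pairFor i li.1 y.1) n ∈ C i := by
  classical
  -- the last level at which no strategy of player `i` has been deleted
  set t := Nat.findGreatest (fun t => A.Pside w C i t = Set.univ) j
  have htj : t ≤ j := Nat.findGreatest_le j
  have hPt : A.Pside w C i t = Set.univ :=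
    Nat.findGreatest_spec (P := fun t => A.Pside w C i t = Set.univ) (Nat.zero_le j)
      (A.Pside_zero w C i)
  have hlit : li ∈ A.Pside w C i (t + 1) := A.Pside_antitone w C i (by omega) hli
  refine ⟨t, htj, hPt, hlit, ?_⟩
  rcases htj.eq_or_lt with heq | hlt
  · exact heq ▸ hwin
  have hne : A.Pside w C i (t + 1) ≠ A.Pside w C i t := by
    rw [hPt]
    exact Nat.findGreatest_is_greatest (Nat.lt_succ_self t) hlt
  have hfin : regPmin (A.uFor w C i) (A.Pside w C i t) (A.Pside w C (!i) t) ≠ ⊤ := fun h =>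
    hne (A.Pside_succ_eq_of_regPmin_eq_top w C h)
  rw [Pside_succ] at hlit
  intro y hy
  exact A.exists_cur_mem_of_util_ne_top fun htop => hfin (hlit.2 ▸ regP_eq_top hy htop)

end Deletion

section Bounds

variable [Fintype S] (A : Arena S) {w : Bool → S → S → ℕ} {C : Bool → Set S} {M : ℕ}

lemma uFor_le_of_mem_Pside_one (hsucc : ∀ s, ∃ t, A.edge s t) {p : Bool}
    (hM : ∀ s t, w p s t ≤ M) (hinit : A.init ∈ A.attrU p (C p)) {y : A.VStrat}
    (hy : y ∈ A.Pside w C p 1)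
    (x : A.VStrat) : A.uFor w C p y x ≤ ↑(2 * (M * Fintype.card S)) := by
  rw [← zero_add 1, Pside_succ, Pside_zero, Pside_zero] at hy
  rw [Nat.cast_mul 2, Nat.cast_ofNat]
  exact le_two_mul_of_regP_eq_regPmin hy.2 (Set.mem_univ (A.attStrat hsucc p (C p)))
    (ENat.natCast_ne_top _) (fun y _ => A.util_attStrat_le hsucc p (C p) hM hinit y)
    (Set.mem_univ x)

lemma uFor_trapStrat_eq_top (hsucc : ∀ s, ∃ t, A.edge s t) {p : Bool}
    (hinit : A.init ∉ A.attrU p (C p)) (x : A.VStrat) :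
    A.uFor w C p x (A.trapStrat hsucc p (C p)) = ⊤ :=
  A.util_eq_top (A.cur_trapStrat_not_mem hsucc p (C p) hinit x)

lemma Pside_eq_univ_of_forall_init_not_mem (hsucc : ∀ s, ∃ t, A.edge s t)
    (hinit : ∀ b, A.init ∉ A.attrU b (C b)) (b : Bool) (t : ℕ) :
    A.Pside w C b t = Set.univ := by
  induction t generalizing b with
  | zero => exact A.Pside_zero w C b
  | succ t ih =>
    rw [A.Pside_succ_eq_of_uFor_eq_top w C (ih (!b) ▸ Set.mem_univ _)
      (A.uFor_trapStrat_eq_top hsucc (hinit b)), ih b]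

lemma init_mem_attrU_not_of_winning (hsucc : ∀ s, ∃ t, A.edge s t) {i : Bool}
    (hinit : A.init ∉ A.attrU i (C i)) {li : A.VStrat} {j : ℕ}
    (hwin : ∀ lo ∈ A.Pside w C (!i) j, ∃ n, A.cur (pairFor i li.1 lo.1) n ∈ C i) :
    A.init ∈ A.attrU (!i) (C (!i)) := by
  by_contra hopp
  have hall : ∀ b, A.init ∉ A.attrU b (C b) := fun b => by
    rcases Bool.eq_or_eq_not b i with rfl | rfl <;> assumption
  obtain ⟨n, hn⟩ := hwin _ (A.Pside_eq_univ_of_forall_init_not_mem hsucc hall (!i) j ▸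
    Set.mem_univ (A.trapStrat hsucc i (C i)))
  exact A.cur_trapStrat_not_mem hsucc i (C i) hinit li n hn

lemma cur_switch_trapStrat_not_mem (hsucc : ∀ s, ∃ t, A.edge s t) {i : Bool} {li y : A.VStrat}
    {m : ℕ}    (hfv : A.firstVisit (C (!i)) (pairFor i li.1 y.1) m)
    (hq : A.cur (pairFor i li.1 y.1) m ∉ A.attrU i (C i))
    (hnot : ∀ k ≤ m, A.cur (pairFor i li.1 y.1) k ∉ C i) (n : ℕ) :
    A.cur (pairFor i li.1 (A.switch (C (!i)) y (A.trapStrat hsucc i (C i))).1) n ∉ C i := by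
  set y' := A.switch (C (!i)) y (A.trapStrat hsucc i (C i))
  have hcur : ∀ k ≤ m, A.cur (pairFor i li.1 y'.1) k = A.cur (pairFor i li.1 y.1) k :=
    fun k hk => A.cur_eq_of_agreeOutside_of_firstVisit
      (A.agreeOutside_switch_right i li.1 y _).symm hfv hk
  rcases le_or_gt n m with hn | hn
  · exact hcur n hn ▸ hnot n hn
  have htrap := A.cur_not_mem_attrU_of_trapStrat hsucc i (C i) (A.pairFor_valid li.2 y'.2)
    (m := m) (hcur m le_rfl ▸ hq) fun k hk => by
      rw [pairFor_not_self]
      exact A.switch_of_mem (A.mem_outList.2 ⟨m, hk, rfl⟩) (hcur m le_rfl ▸ hfv.1)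
  exact fun h => htrap n hn.le (A.attr_subset_attrU i (C i) 0 h)

lemma uFor_switch_attStrat_le (hsucc : ∀ s, ∃ t, A.edge s t) {i : Bool}
    (hpos : ∀ s t, A.edge s t → 1 ≤ w (!i) s t)
    (hM : ∀ s t, w i s t ≤ M) {Q : Set A.VStrat} {li : A.VStrat} {R : ℕ}
    (hrush : ∀ y ∈ Q, ∀ x, A.uFor w C (!i) y x ≤ R)
    (hclosed : ∀ y ∈ Q, ∀ y', (∀ x, A.uFor w C (!i) y' x = A.uFor w C (!i) y x) →
      y' ∈ Q)
    (hbeat : ∀ y ∈ Q, ∃ n, A.cur (pairFor i li.1 y.1) n ∈ C i) {y : A.VStrat}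
    (hy : y ∈ Q) :
    A.uFor w C i (A.switch (C (!i)) li (A.attStrat hsucc i (C i))) y ≤
      ↑(M * (R + Fintype.card S)) := by
  set xh := A.switch (C (!i)) li (A.attStrat hsucc i (C i))
  set σ := pairFor i xh.1 y.1
  have hv : ∀ b, A.Valid (σ b) := A.pairFor_valid xh.2 y.2
  obtain ⟨m, hmR, hfv⟩ : ∃ m ≤ R, A.firstVisit (C (!i)) σ m := by
    refine A.exists_firstVisit_le_of_util_le hpos hv ?_
    simpa only [uFor, pairFor_not] using hrush y hy xh
  suffices ∃ k ≤ m + Fintype.card S, A.cur σ k ∈ C i by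
    obtain ⟨k, hk, hkC⟩ := this
    exact (A.util_le_of_cur_mem hM hkC).trans
      (by exact_mod_cast Nat.mul_le_mul_left M (by omega))
  by_cases hq : A.cur σ m ∈ A.attrU i (C i)
  · obtain ⟨n, -, hn, hnC⟩ := A.exists_cur_mem_of_attStrat hsucc i (C i) hv hq fun k hk => by
      simp only [σ, pairFor_self]
      exact A.switch_of_mem (A.mem_outList.2 ⟨m, hk, rfl⟩) hfv.1
    exact ⟨n, hn, hnC⟩
  -- Otherwise the opponent may switch to trapping once `C (!i)` is reached, which keeps her
  -- utility and hence her membership in `Q`, while `li` would then never reach `C i`.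
  by_contra! hnot
  have H := A.agreeOutside_switch_left (C := C (!i)) i li (A.attStrat hsucc i (C i)) y.1
  have hcur := fun k (hk : k ≤ m) => A.cur_eq_of_agreeOutside_of_firstVisit H hfv hk
  have hy' := hclosed y hy (A.switch (C (!i)) y (A.trapStrat hsucc i (C i))) fun x =>
    A.util_eq_of_agreeOutside (A.agreeOutside_switch_left (!i) y _ x.1).symm
  obtain ⟨n, hn⟩ := hbeat _ hy'
  exact A.cur_switch_trapStrat_not_mem hsucc (A.firstVisit_of_agreeOutside H hfv)
    (hcur m le_rfl ▸ hq) (fun k hk => hcur k hk ▸ hnot k (by omega)) n hn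

lemma uFor_le_of_init_not_mem_attrU (hsucc : ∀ s, ∃ t, A.edge s t) {i : Bool}
    (hpos : ∀ κ s t, A.edge s t → 1 ≤ w κ s t) (hM : ∀ κ s t, w κ s t ≤ M)
    (hinit : A.init ∉ A.attrU i (C i)) {j : ℕ} {li lo : A.VStrat}
    (hli : li ∈ A.Pside w C i (j + 1))
    (hwin : ∀ lo ∈ A.Pside w C (!i) j, ∃ n, A.cur (pairFor i li.1 lo.1) n ∈ C i)
    (hlo : lo ∈ A.Pside w C (!i) j) :
    A.uFor w C i li lo ≤ ↑(2 * (M * (2 * (M * Fintype.card S) + Fintype.card S))) := by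
  obtain ⟨t, htj, hPt, hlit, hbeat⟩ := A.exists_level_Pside_eq_univ w C hli hwin
  have ht : 1 ≤ t := by
    by_contra! ht
    obtain ⟨n, hn⟩ :=
      hbeat (A.trapStrat hsucc i (C i)) (by simp [Nat.lt_one_iff.1 ht, Pside_zero])
    exact A.cur_trapStrat_not_mem hsucc i (C i) hinit li n hn
  have hrush : ∀ y ∈ A.Pside w C (!i) t, ∀ x,
      A.uFor w C (!i) y x ≤ ↑(2 * (M * Fintype.card S)) := fun y hy =>
    A.uFor_le_of_mem_Pside_one hsucc (hM (!i)) (A.init_mem_attrU_not_of_winning hsucc hinit hwin)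
      (A.Pside_antitone w C (!i) ht hy)
  rw [Pside_succ, hPt] at hlit
  rw [Nat.cast_mul 2, Nat.cast_ofNat]
  exact le_two_mul_of_regP_eq_regPmin hlit.2 (Set.mem_univ _) (ENat.natCast_ne_top _)
    (fun y hy => A.uFor_switch_attStrat_le hsucc (hpos (!i)) (hM i) hrush
      (fun y hy y' h => A.mem_Pside_of_uFor_eq w C h hy) hbeat hy)
    (A.Pside_antitone w C (!i) htj hlo)

end Bounds

end Arena

/-- In a finite positive weighted arena, every `j`-winning
strategy of player `i` minimizing the `(j+1)`-th regret is `j`-bounded by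
`6·M³·|S|`: against every strategy surviving `j` deletions, both players'
accumulated weights up to the first visit of `Cᵢ` are at most `6·M³·|S|`. -/
theorem jwinning_min_regret_jbounded {S : Type} [Fintype S] (A : Arena S)
    (w : Bool → S → S → ℕ) (C : Bool → Set S) (M : ℕ)
    (hpos : ∀ (κ : Bool) s t, A.edge s t → 1 ≤ w κ s t)
    (hM : ∀ (κ : Bool) s t, w κ s t ≤ M)
    (i : Bool) (j : ℕ) (li : A.VStrat) (hmem : li ∈ A.Pside w C i j)
    (hwin : ∀ lo ∈ A.Pside w C (!i) j,
      ∃ n : ℕ, A.cur (Arena.pairFor i li.1 lo.1) n ∈ C i)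
    (hmin : regP (A.uFor w C i) (A.Pside w C i j) (A.Pside w C (!i) j) li =
      regPmin (A.uFor w C i) (A.Pside w C i j) (A.Pside w C (!i) j)) :
    ∀ lo ∈ A.Pside w C (!i) j, ∀ (κ : Bool) (n : ℕ),
      A.firstVisit (C i) (Arena.pairFor i li.1 lo.1) n →
      Arena.pathWeight (w κ) (A.outList (Arena.pairFor i li.1 lo.1) n) ≤
        6 * M ^ 3 * Fintype.card S := by
  intro lo hlo κ n hfv
  have hsucc := A.exists_edge_of_valid li.2
  have hli : li ∈ A.Pside w C i (j + 1) := by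
    rw [Arena.Pside_succ]
    exact ⟨hmem, hmin⟩
  set c := Fintype.card S
  have hu : A.uFor w C i li lo ≤ ↑(2 * (M * (2 * (M * c) + c))) := by
    by_cases hinit : A.init ∈ A.attrU i (C i)
    · refine (A.uFor_le_of_mem_Pside_one hsucc (hM i) hinit
        (A.Pside_antitone w C i (Nat.le_add_left 1 j) hli) lo).trans ?_
      exact_mod_cast Nat.mul_le_mul_left 2 (Nat.mul_le_mul_left M (Nat.le_add_left c _))
    · exact A.uFor_le_of_init_not_mem_attrU hsucc hpos hM hinit hli hwin hlo
  have hcube : M ^ 2 * c ≤ M ^ 3 * c := by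
    rcases M.eq_zero_or_pos with rfl | hM0
    · simp
    · exact Nat.mul_le_mul_right c (Nat.pow_le_pow_right hM0 (by omega))
  calc _ ≤ M * (2 * (M * (2 * (M * c) + c))) :=
        A.pathWeight_le_of_util_le (hpos i) (hM κ) (A.pairFor_valid li.2 lo.2) hfv hu
    _ ≤ 6 * M ^ 3 * c := by ring_nf; omega
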